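/- arXiv:2603.23876 — 2 statements merged into one kernel-verified Lean document; each statement's English description precedes it below -/
import Mathlib

section
/- If K and H are integrable functions on ℝ and both are PF(2), then the convolution K * H is PF(2). -/
open MeasureTheory

/-- `K : ℝ → ℝ` is PF(2): the kernel `G x y = K (x - y)` is nonnegative and its
2×2 minors are nonnegative. -/
def PF2 (K : ℝ → ℝ) : Prop :=
  (∀ x : ℝ, 0 ≤ K x) ∧
  ∀ x₁ x₂ y₁ y₂ : ℝ, x₁ < x₂ → y₁ < y₂ →
    0 ≤ K (x₁ - y₁) * K (x₂ - y₂) - K (x₁ - y₂) * K (x₂ - y₁)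

lemma PF2.logconcave {K : ℝ → ℝ} (hK : PF2 K) (a b : ℝ) (h : a < b) :
    K a * K b ≤ K ((a + b) / 2) ^ 2 := by
  have h2 := hK.2 0 ((b - a) / 2) (-((a + b) / 2)) (-a) (by linarith) (by linarith)
  rw [show (0:ℝ) - -((a + b) / 2) = (a + b) / 2 by ring,
      show (b - a) / 2 - -a = (a + b) / 2 by ring,
      show (0:ℝ) - -a = a by ring,
      show (b - a) / 2 - -((a + b) / 2) = b by ring] at h2
  nlinarith [h2]

lemma exists_ae_bound (K : ℝ → ℝ) (hKi : Integrable K) (h0 : ∀ x, 0 ≤ K x)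
    (hlc : ∀ a b : ℝ, a < b → K a * K b ≤ K ((a + b) / 2) ^ 2) :
    ∃ M : ℝ, ∀ᵐ x : ℝ, K x ≤ M := by
  by_contra hcon
  push_neg at hcon
  have hS : volume {x : ℝ | 1 < K x} ≠ 0 := by
    intro h
    refine hcon 1 ?_
    rw [ae_iff]
    convert h using 2
    ext x; simp [not_le]
  set C := ∫⁻ x : ℝ, ENNReal.ofReal (K x) with hCdef
  have hCfin : C ≠ ⊤ := by
    have h1 : C = ∫⁻ x : ℝ, ‖K x‖ₑ := by
      refine lintegral_congr fun x => ?_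
      rw [Real.enorm_eq_ofReal (h0 x)]
    rw [h1]
    exact hKi.2.ne
  set e := ENNReal.ofReal |(2:ℝ)⁻¹| * volume {x : ℝ | 1 < K x} with he
  have he0 : e ≠ 0 := by
    refine mul_ne_zero ?_ hS
    exact (ENNReal.ofReal_pos.mpr (by norm_num : (0:ℝ) < |(2:ℝ)⁻¹|)).ne'
  obtain ⟨n, hn⟩ := ENNReal.exists_nat_gt (ENNReal.div_lt_top hCfin he0).ne
  obtain ⟨a, ha⟩ : ∃ a : ℝ, (n : ℝ) ^ 2 < K a := by
    by_contra h; push_neg at h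
    exact hcon ((n : ℝ) ^ 2) (Filter.Eventually.of_forall fun x => not_lt.mpr (h x))
  set T := (fun x : ℝ => (2:ℝ) * x) ⁻¹' ((fun x : ℝ => x + -a) ⁻¹' ({x : ℝ | 1 < K x} \ {a}))
    with hT
  have hTsub : T ⊆ {x : ℝ | ENNReal.ofReal n ≤ ENNReal.ofReal (K x)} := by
    intro x hx
    simp only [hT, Set.mem_preimage, Set.mem_diff, Set.mem_setOf_eq,
      Set.mem_singleton_iff] at hx
    obtain ⟨hb1, hb2⟩ := hx
    have hKx : (n : ℝ) ≤ K x := by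
      rcases lt_or_gt_of_ne hb2 with hlt | hgt
      · have h3 := hlc _ a hlt
        rw [show ((2 * x + -a) + a) / 2 = x by ring] at h3
        nlinarith [h0 x, h0 (2 * x + -a), h0 a, n.cast_nonneg (α := ℝ)]
      · have h3 := hlc a _ hgt
        rw [show (a + (2 * x + -a)) / 2 = x by ring] at h3
        nlinarith [h0 x, h0 (2 * x + -a), h0 a, n.cast_nonneg (α := ℝ)]
    exact ENNReal.ofReal_le_ofReal hKx
  have hTvol : volume T = e := by
    rw [hT, Real.volume_preimage_mul_left (two_ne_zero),
      measure_preimage_add_right volume (-a) _,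
      measure_diff_null (measure_singleton a)]
  have hmark : ENNReal.ofReal n * volume T ≤ C := by
    refine le_trans (mul_le_mul_right (measure_mono hTsub) _) ?_
    exact mul_meas_ge_le_lintegral₀ hKi.1.aemeasurable.ennreal_ofReal _
  rw [hTvol, ENNReal.ofReal_natCast] at hmark
  have hlt : C < (n : ENNReal) * e := by
    rwa [ENNReal.div_lt_iff (Or.inl he0) (Or.inr hCfin)] at hn
  exact absurd hmark (not_le.mpr hlt)

lemma basic_composition (f g p q : ℝ → ℝ)
    (hfp : Integrable (fun z => f z * p z))
    (hfq : Integrable (fun z => f z * q z))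
    (hgp : Integrable (fun z => g z * p z))
    (hgq : Integrable (fun z => g z * q z))
    (hpos : ∀ z w : ℝ, z < w →
      0 ≤ f z * g w - f w * g z ∧ 0 ≤ p z * q w - p w * q z) :
    (∫ z : ℝ, f z * q z) * (∫ z : ℝ, g z * p z) ≤
      (∫ z : ℝ, f z * p z) * (∫ z : ℝ, g z * q z) := by
  set A := ∫ z : ℝ, f z * p z with hA
  set B := ∫ z : ℝ, f z * q z with hB
  set C := ∫ z : ℝ, g z * p z with hC
  set D := ∫ z : ℝ, g z * q z with hD
  have hPhi : ∀ z w : ℝ, 0 ≤ (f z * g w - f w * g z) * (p z * q w - p w * q z) := by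
    intro z w
    rcases lt_trichotomy z w with h | rfl | h
    · exact mul_nonneg (hpos z w h).1 (hpos z w h).2
    · rw [sub_self, zero_mul]
    · have h1 := (hpos w z h).1
      have h2 := (hpos w z h).2
      nlinarith
  have hinner : ∀ z : ℝ, (∫ w : ℝ, (f z * g w - f w * g z) * (p z * q w - p w * q z))
      = f z * p z * D - f z * q z * C - (g z * p z * B - g z * q z * A) := by
    intro z
    have hre : (fun w => (f z * g w - f w * g z) * (p z * q w - p w * q z))
        = fun w => (f z * p z) * (g w * q w) - (f z * q z) * (g w * p w)
          - ((g z * p z) * (f w * q w) - (g z * q z) * (f w * p w)) := by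
      funext w; ring
    have i1 : Integrable (fun w => (f z * p z) * (g w * q w) - (f z * q z) * (g w * p w)) :=
      (hgq.const_mul _).sub (hgp.const_mul _)
    have i2 : Integrable (fun w => (g z * p z) * (f w * q w) - (g z * q z) * (f w * p w)) :=
      (hfq.const_mul _).sub (hfp.const_mul _)
    rw [hre, integral_sub i1 i2,
      integral_sub (hgq.const_mul _) (hgp.const_mul _),
      integral_sub (hfq.const_mul _) (hfp.const_mul _),
      integral_const_mul, integral_const_mul, integral_const_mul, integral_const_mul]
  have h0 : 0 ≤ ∫ z : ℝ,
      (f z * p z * D - f z * q z * C - (g z * p z * B - g z * q z * A)) := by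
    refine integral_nonneg fun z => ?_
    rw [← hinner z]
    exact integral_nonneg fun w => hPhi z w
  have houter : (∫ z : ℝ,
      (f z * p z * D - f z * q z * C - (g z * p z * B - g z * q z * A)))
      = A * D - B * C - (C * B - D * A) := by
    have j1 : Integrable (fun z => f z * p z * D - f z * q z * C) :=
      (hfp.mul_const _).sub (hfq.mul_const _)
    have j2 : Integrable (fun z => g z * p z * B - g z * q z * A) :=
      (hgp.mul_const _).sub (hgq.mul_const _)
    rw [integral_sub j1 j2,
      integral_sub (hfp.mul_const _) (hfq.mul_const _),
      integral_sub (hgp.mul_const _) (hgq.mul_const _),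
      integral_mul_const, integral_mul_const, integral_mul_const, integral_mul_const]
  rw [houter] at h0
  nlinarith [h0]

/-- The convolution of two integrable PF(2) functions is PF(2). -/
theorem PF2.convolution (K H : ℝ → ℝ)
    (hKi : Integrable K) (hHi : Integrable H)
    (hK : PF2 K) (hH : PF2 H) :
    PF2 (fun x => ∫ y : ℝ, K (x - y) * H y) := by
  constructor
  · intro x
    exact integral_nonneg fun y => mul_nonneg (hK.1 _) (hH.1 _)
  · intro x₁ x₂ y₁ y₂ hx hy
    obtain ⟨M, hM⟩ := exists_ae_bound K hKi hK.1 hK.logconcave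
    -- integrability of the mixed products
    have hmix : ∀ c d : ℝ, Integrable (fun z => K (c - z) * H (z - d)) := by
      intro c d
      have hHd : Integrable (fun z : ℝ => H (z - d)) :=
        ((measurePreserving_sub_right volume d).integrable_comp
          hHi.aestronglyMeasurable).mpr hHi
      have hmeas : AEStronglyMeasurable (fun z : ℝ => K (c - z) * H (z - d)) volume := by
        exact (hKi.1.comp_quasiMeasurePreserving
            (Measure.measurePreserving_sub_left volume c).quasiMeasurePreserving).mul
          (hHi.1.comp_quasiMeasurePreserving
            (measurePreserving_sub_right volume d).quasiMeasurePreserving)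
      refine (hHd.const_mul M).mono' hmeas ?_
      have hKb : ∀ᵐ z : ℝ, K (c - z) ≤ M :=
        (Measure.measurePreserving_sub_left volume c).quasiMeasurePreserving.ae hM
      filter_upwards [hKb] with z hz
      rw [norm_mul, Real.norm_of_nonneg (hK.1 _), Real.norm_of_nonneg (hH.1 _)]
      exact mul_le_mul_of_nonneg_right hz (hH.1 _)
    -- change of variables
    have hrw : ∀ c d : ℝ, (∫ y : ℝ, K (c - d - y) * H y)
        = ∫ z : ℝ, K (c - z) * H (z - d) := by
      intro c d
      have := integral_add_right_eq_self (μ := volume)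
        (fun z : ℝ => K (c - z) * H (z - d)) d
      rw [← this]
      congr 1
      funext x
      rw [show c - (x + d) = c - d - x by ring, show x + d - d = x by ring]
    simp only
    rw [hrw x₁ y₁, hrw x₂ y₂, hrw x₁ y₂, hrw x₂ y₁, sub_nonneg]
    refine basic_composition (fun z => K (x₁ - z)) (fun z => K (x₂ - z))
      (fun z => H (z - y₁)) (fun z => H (z - y₂))
      (hmix x₁ y₁) (hmix x₁ y₂) (hmix x₂ y₁) (hmix x₂ y₂) ?_
    intro z w hzw
    constructor
    · exact hK.2 x₁ x₂ z w hx hzw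
    · have := hH.2 z w y₁ y₂ hzw hy
      linarith [this, mul_comm (H (z - y₂)) (H (w - y₁))]
end

section
/- If K and H are continuous, integrable functions on ℝ that are both strongly PF(2), then K * H is strongly PF(2). -/
open MeasureTheory

/-- `K : ℝ → ℝ` is strongly PF(2): it is PF(2), `K 0 > 0`, and the diagonal
2×2 minors are strictly positive. -/
def StronglyPF2 (K : ℝ → ℝ) : Prop :=
  PF2 K ∧ 0 < K 0 ∧
  ∀ x₁ x₂ : ℝ, x₁ < x₂ → 0 < K 0 * K 0 - K (x₁ - x₂) * K (x₂ - x₁)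

open Filter Set

section Aux

/-- Midpoint log-concavity from the PF(2) minor inequality. -/
lemma SPF2aux_mid (K : ℝ → ℝ)
    (h : ∀ x₁ x₂ y₁ y₂ : ℝ, x₁ < x₂ → y₁ < y₂ →
      0 ≤ K (x₁ - y₁) * K (x₂ - y₂) - K (x₁ - y₂) * K (x₂ - y₁)) :
    ∀ s t : ℝ, s ≤ t → K s * K t ≤ K ((s+t)/2) * K ((s+t)/2) := by
  intro s t hst
  rcases eq_or_lt_of_le hst with rfl | hlt
  · have e : (s + s)/2 = s := by ring
    rw [e]
  · have h' := h ((s+t)/2) t 0 ((t-s)/2) (by linarith) (by linarith)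
    have e1 : (s+t)/2 - 0 = (s+t)/2 := by ring
    have e2 : t - (t-s)/2 = (s+t)/2 := by ring
    have e3 : (s+t)/2 - (t-s)/2 = s := by ring
    have e4 : t - 0 = t := by ring
    rw [e1, e2, e3, e4] at h'
    linarith

lemma SPF2aux_quasi (K : ℝ → ℝ) (hc : Continuous K) (h0 : 0 < K 0)
    (hnn : ∀ x : ℝ, 0 ≤ K x)
    (hmid : ∀ s t : ℝ, s ≤ t → K s * K t ≤ K ((s+t)/2) * K ((s+t)/2))
    {x : ℝ} (hx : 0 < x) (hKx : K 0 ≤ K x) :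
    ∀ t ∈ Set.Icc (0:ℝ) x, K 0 ≤ K t := by
  have dyadic : ∀ n : ℕ, ∀ k : ℕ, k ≤ 2^n → K 0 ≤ K ((k / 2^n : ℝ) * x) := by
    intro n
    induction n with
    | zero =>
      intro k hk
      interval_cases k
      · norm_num
      · norm_num [hKx]
    | succ n ih =>
      intro k hk
      rw [pow_succ] at hk
      rcases Nat.even_or_odd k with ⟨j, hj⟩ | ⟨j, hj⟩
      · have hj2 : j ≤ 2^n := by omega
        have := ih j hj2
        have e : ((k : ℝ) / 2^(n+1)) = (j : ℝ)/2^n := by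
          subst hj; push_cast; rw [pow_succ]; field_simp; ring
        rw [e]; exact this
      · have hj1 : j + 1 ≤ 2^n := by omega
        have h₁ := ih j (by omega)
        have h₂ := ih (j+1) hj1
        have hst : ((j:ℝ)/2^n) * x ≤ (((j:ℝ)+1)/2^n) * x := by
          gcongr; linarith
        have hm := hmid _ _ hst
        have e : ((((j:ℝ)/2^n) * x) + ((((j:ℝ)+1)/2^n) * x))/2 = ((k:ℝ)/2^(n+1)) * x := by
          subst hj; push_cast; rw [pow_succ]; field_simp; ring
        rw [e] at hm
        push_cast at h₂
        nlinarith [hnn (((k:ℝ)/2^(n+1)) * x)]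
  intro t ht
  have key : ∀ s ∈ Set.Icc (0:ℝ) 1, K 0 ≤ K (s * x) := by
    intro s hs
    set u : ℕ → ℝ := fun n => (⌊s * 2^n⌋₊ : ℝ)/2^n with hu
    have hun : ∀ n, K 0 ≤ K (u n * x) := by
      intro n
      apply dyadic n
      have : s * 2^n ≤ ((2^n : ℕ) : ℝ) := by
        push_cast; nlinarith [hs.2, pow_pos (by norm_num : (0:ℝ) < 2) n]
      calc ⌊s * 2^n⌋₊ ≤ ⌊((2^n : ℕ) : ℝ)⌋₊ := Nat.floor_mono this
        _ = 2^n := Nat.floor_natCast _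
    have hulim : Tendsto u atTop (nhds s) := by
      have hlow : ∀ n, s - (1/2:ℝ)^n ≤ u n := by
        intro n
        have h2 : (0:ℝ) < 2^n := by positivity
        have := Nat.lt_floor_add_one (s * 2^n)
        rw [hu]; rw [le_div_iff₀ h2]
        have e : ((1:ℝ)/2)^n = 1/2^n := by rw [div_pow, one_pow]
        rw [e]
        have : (s - 1/2^n) * 2^n = s * 2^n - 1 := by field_simp
        rw [this]; linarith
      have hup : ∀ n, u n ≤ s := by
        intro n
        have h2 : (0:ℝ) < 2^n := by positivity
        rw [hu, div_le_iff₀ h2]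
        exact Nat.floor_le (mul_nonneg hs.1 (by positivity))
      have hl : Tendsto (fun n : ℕ => s - (1/2:ℝ)^n) atTop (nhds s) := by
        have := tendsto_pow_atTop_nhds_zero_of_lt_one
          (by norm_num : (0:ℝ) ≤ 1/2) (by norm_num : (1/2:ℝ) < 1)
        simpa using tendsto_const_nhds.sub this
      exact tendsto_of_tendsto_of_tendsto_of_le_of_le hl tendsto_const_nhds hlow hup
    have hlim : Tendsto (fun n => K (u n * x)) atTop (nhds (K (s * x))) :=
      (hc.tendsto _).comp (hulim.mul_const x)
    exact ge_of_tendsto hlim (Eventually.of_forall hun)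
  have hx0 : x ≠ 0 := ne_of_gt hx
  have := key (t / x) ⟨div_nonneg ht.1 hx.le, (div_le_one hx).2 ht.2⟩
  rwa [div_mul_cancel₀ _ hx0] at this

lemma SPF2aux_far (K : ℝ → ℝ) (hc : Continuous K) (h0 : 0 < K 0)
    (hnn : ∀ x : ℝ, 0 ≤ K x)
    (hmid : ∀ s t : ℝ, s ≤ t → K s * K t ≤ K ((s+t)/2) * K ((s+t)/2))
    (hKi : Integrable K) {x : ℝ} (hx : 0 < x) (hKx : K 0 ≤ K x) :
    x * K 0 ≤ ∫ t, K t := by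
  have hq := SPF2aux_quasi K hc h0 hnn hmid hx hKx
  have h1 : K 0 * (volume (Set.Icc (0:ℝ) x)).toReal ≤ ∫ t in Set.Icc (0:ℝ) x, K t :=
    setIntegral_ge_of_const_le_real measurableSet_Icc (by simp [Real.volume_Icc]) hq
      hKi.integrableOn
  have h2 : ∫ t in Set.Icc (0:ℝ) x, K t ≤ ∫ t, K t :=
    setIntegral_le_integral hKi (Eventually.of_forall hnn)
  have h3 : (volume (Set.Icc (0:ℝ) x)).toReal = x := by
    simp [Real.volume_Icc, ENNReal.toReal_ofReal hx.le]
  rw [h3] at h1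
  linarith

lemma SPF2aux_bounded (K : ℝ → ℝ) (hc : Continuous K) (h0 : 0 < K 0)
    (hnn : ∀ x : ℝ, 0 ≤ K x)
    (hmid : ∀ s t : ℝ, s ≤ t → K s * K t ≤ K ((s+t)/2) * K ((s+t)/2))
    (hKi : Integrable K) : ∃ M : ℝ, 0 < M ∧ ∀ x, K x ≤ M := by
  obtain ⟨R, hR1, hIK⟩ : ∃ R : ℝ, 0 < R ∧ (∫ t, K t) / K 0 < R :=
    ⟨max ((∫ t, K t) / K 0) 0 + 1, by positivity,
      by have := le_max_left ((∫ t, K t) / K 0) 0; linarith⟩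
  have h0mem : (0:ℝ) ∈ Set.Icc (-R) R := by constructor <;> linarith
  obtain ⟨z, hz, hzmax'⟩ := isCompact_Icc.exists_isMaxOn ⟨0, h0mem⟩ hc.continuousOn
  have hzmax : ∀ y ∈ Set.Icc (-R) R, K y ≤ K z := fun y hy => hzmax' hy
  refine ⟨K z, lt_of_lt_of_le h0 (hzmax 0 h0mem), fun x => ?_⟩
  by_contra hlt
  push_neg at hlt
  have hK0x : K 0 ≤ K x := le_trans (hzmax 0 h0mem) hlt.le
  have hxR : ¬ (x ∈ Set.Icc (-R) R) := fun hmem => absurd (hzmax x hmem) (not_le.2 hlt)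
  rcases not_and_or.1 hxR with hx1 | hx2
  · push_neg at hx1
    have hx1 : x < -R := by simpa using hx1
    set Kn : ℝ → ℝ := fun t => K (-t) with hKn
    have hmidn : ∀ s t : ℝ, s ≤ t → Kn s * Kn t ≤ Kn ((s+t)/2) * Kn ((s+t)/2) := by
      intro s t hst
      have h := hmid (-t) (-s) (by linarith)
      have e : ((-t) + (-s))/2 = -((s+t)/2) := by ring
      rw [e] at h
      simp only [hKn]
      linarith [h]
    have hKni : Integrable Kn := hKi.comp_neg
    have hKn0 : Kn 0 = K 0 := by simp [hKn]
    have hfar := SPF2aux_far Kn (hc.comp continuous_neg) (by rwa [hKn0])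
      (fun t => hnn (-t)) hmidn hKni (x := -x) (by linarith)
      (by simp only [hKn, neg_neg, neg_zero]; exact hK0x)
    have hIn : ∫ t, Kn t = ∫ t, K t := by
      simp only [hKn]
      exact integral_neg_eq_self K volume
    rw [hIn, hKn0] at hfar
    have : -x ≤ (∫ t, K t) / K 0 := by
      rw [le_div_iff₀ h0]; linarith
    linarith
  · push_neg at hx2
    have hfar := SPF2aux_far K hc h0 hnn hmid hKi (x := x) (by linarith) hK0x
    have : x ≤ (∫ t, K t) / K 0 := by rw [le_div_iff₀ h0]; linarith
    linarith

/-- The basic composition (symmetrization) identity. -/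
lemma SPF2aux_key_eq (K H : ℝ → ℝ)
    (hints : ∀ a b : ℝ, Integrable (fun u => K (a - u) * H (u - b)))
    (x₁ x₂ y₁ y₂ : ℝ) :
    2 * ((∫ u, K (x₁ - u) * H (u - y₁)) * (∫ u, K (x₂ - u) * H (u - y₂))
      - (∫ u, K (x₁ - u) * H (u - y₂)) * (∫ u, K (x₂ - u) * H (u - y₁)))
    = ∫ z : ℝ × ℝ, (K (x₁ - z.1) * K (x₂ - z.2) - K (x₁ - z.2) * K (x₂ - z.1))
        * (H (z.1 - y₁) * H (z.2 - y₂) - H (z.1 - y₂) * H (z.2 - y₁)) := by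
  have P : ∀ a b c d : ℝ, (∫ u, K (a - u) * H (u - b)) * (∫ v, K (c - v) * H (v - d))
      = ∫ z : ℝ × ℝ, (K (a - z.1) * H (z.1 - b)) * (K (c - z.2) * H (z.2 - d)) := by
    intro a b c d
    rw [Measure.volume_eq_prod]
    exact (integral_prod_mul _ _).symm
  have I2 : ∀ a b c d : ℝ, Integrable
      (fun z : ℝ × ℝ => (K (a - z.1) * H (z.1 - b)) * (K (c - z.2) * H (z.2 - d))) := by
    intro a b c d
    rw [Measure.volume_eq_prod]
    exact (hints a b).mul_prod (hints c d)
  have Ia : Integrable (fun z : ℝ × ℝ =>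
      (K (x₁ - z.1) * H (z.1 - y₁)) * (K (x₂ - z.2) * H (z.2 - y₂))
      + (K (x₂ - z.1) * H (z.1 - y₂)) * (K (x₁ - z.2) * H (z.2 - y₁))) :=
    (I2 x₁ y₁ x₂ y₂).add (I2 x₂ y₂ x₁ y₁)
  have Ib : Integrable (fun z : ℝ × ℝ =>
      (K (x₁ - z.1) * H (z.1 - y₂)) * (K (x₂ - z.2) * H (z.2 - y₁))
      + (K (x₂ - z.1) * H (z.1 - y₁)) * (K (x₁ - z.2) * H (z.2 - y₂))) :=
    (I2 x₁ y₂ x₂ y₁).add (I2 x₂ y₁ x₁ y₂)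
  have e : (fun z : ℝ × ℝ => (K (x₁ - z.1) * K (x₂ - z.2) - K (x₁ - z.2) * K (x₂ - z.1))
        * (H (z.1 - y₁) * H (z.2 - y₂) - H (z.1 - y₂) * H (z.2 - y₁)))
      = fun z : ℝ × ℝ =>
        ((K (x₁ - z.1) * H (z.1 - y₁)) * (K (x₂ - z.2) * H (z.2 - y₂))
          + (K (x₂ - z.1) * H (z.1 - y₂)) * (K (x₁ - z.2) * H (z.2 - y₁)))
        - ((K (x₁ - z.1) * H (z.1 - y₂)) * (K (x₂ - z.2) * H (z.2 - y₁))
          + (K (x₂ - z.1) * H (z.1 - y₁)) * (K (x₁ - z.2) * H (z.2 - y₂))) := by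
    funext z; ring
  rw [e, integral_sub Ia Ib,
    integral_add (I2 x₁ y₁ x₂ y₂) (I2 x₂ y₂ x₁ y₁),
    integral_add (I2 x₁ y₂ x₂ y₁) (I2 x₂ y₁ x₁ y₂),
    ← P x₁ y₁ x₂ y₂, ← P x₂ y₂ x₁ y₁, ← P x₁ y₂ x₂ y₁, ← P x₂ y₁ x₁ y₂]
  ring

/-- Integrability of the symmetrized integrand. -/
lemma SPF2aux_key_int (K H : ℝ → ℝ)
    (hints : ∀ a b : ℝ, Integrable (fun u => K (a - u) * H (u - b)))
    (x₁ x₂ y₁ y₂ : ℝ) :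
    Integrable (fun z : ℝ × ℝ =>
      (K (x₁ - z.1) * K (x₂ - z.2) - K (x₁ - z.2) * K (x₂ - z.1))
        * (H (z.1 - y₁) * H (z.2 - y₂) - H (z.1 - y₂) * H (z.2 - y₁))) := by
  have I2 : ∀ a b c d : ℝ, Integrable
      (fun z : ℝ × ℝ => (K (a - z.1) * H (z.1 - b)) * (K (c - z.2) * H (z.2 - d))) := by
    intro a b c d
    rw [Measure.volume_eq_prod]
    exact (hints a b).mul_prod (hints c d)
  have e : (fun z : ℝ × ℝ => (K (x₁ - z.1) * K (x₂ - z.2) - K (x₁ - z.2) * K (x₂ - z.1))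
        * (H (z.1 - y₁) * H (z.2 - y₂) - H (z.1 - y₂) * H (z.2 - y₁)))
      = fun z : ℝ × ℝ =>
        ((K (x₁ - z.1) * H (z.1 - y₁)) * (K (x₂ - z.2) * H (z.2 - y₂))
          + (K (x₂ - z.1) * H (z.1 - y₂)) * (K (x₁ - z.2) * H (z.2 - y₁)))
        - ((K (x₁ - z.1) * H (z.1 - y₂)) * (K (x₂ - z.2) * H (z.2 - y₁))
          + (K (x₂ - z.1) * H (z.1 - y₁)) * (K (x₁ - z.2) * H (z.2 - y₂))) := by
    funext z; ring
  rw [e]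
  exact ((I2 x₁ y₁ x₂ y₂).add (I2 x₂ y₂ x₁ y₁)).sub
    ((I2 x₁ y₂ x₂ y₁).add (I2 x₂ y₁ x₁ y₂))

/-- Pointwise nonnegativity of the symmetrized integrand. -/
lemma SPF2aux_key_nn (K H : ℝ → ℝ) (hK : PF2 K) (hH : PF2 H)
    {x₁ x₂ y₁ y₂ : ℝ} (hx : x₁ < x₂) (hy : y₁ < y₂) (z : ℝ × ℝ) :
    0 ≤ (K (x₁ - z.1) * K (x₂ - z.2) - K (x₁ - z.2) * K (x₂ - z.1))
        * (H (z.1 - y₁) * H (z.2 - y₂) - H (z.1 - y₂) * H (z.2 - y₁)) := by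
  rcases lt_trichotomy z.1 z.2 with h | h | h
  · exact mul_nonneg (hK.2 x₁ x₂ z.1 z.2 hx h) (hH.2 z.1 z.2 y₁ y₂ h hy)
  · rw [h]; simp
  · nlinarith [hK.2 x₁ x₂ z.2 z.1 hx h, hH.2 z.2 z.1 y₁ y₂ h hy]

/-- Positivity of the integral of a continuous nonnegative function which is
positive somewhere. -/
lemma SPF2aux_pos {α : Type*} [MeasureSpace α] [TopologicalSpace α]
    [OpensMeasurableSpace α] [(volume : Measure α).IsOpenPosMeasure]
    (f : α → ℝ) (hc : Continuous f) (hi : Integrable f) (hnn : ∀ x, 0 ≤ f x)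
    (x₀ : α) (hx : 0 < f x₀) : 0 < ∫ x, f x := by
  rw [integral_pos_iff_support_of_nonneg (fun x => hnn x) hi]
  have hsub : {x | 0 < f x} ⊆ Function.support f := fun x h => ne_of_gt h
  have ho : IsOpen {x | 0 < f x} := isOpen_lt continuous_const hc
  exact lt_of_lt_of_le (ho.measure_pos volume ⟨x₀, hx⟩) (measure_mono hsub)

end Aux

/-- The convolution of two continuous integrable strongly PF(2) functions is
strongly PF(2). -/
theorem StronglyPF2.convolution (K H : ℝ → ℝ)
    (hKc : Continuous K) (hHc : Continuous H)
    (hKi : Integrable K) (hHi : Integrable H)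
    (hK : StronglyPF2 K) (hH : StronglyPF2 H) :
    StronglyPF2 (fun x => ∫ y : ℝ, K (x - y) * H y) := by
  obtain ⟨⟨hKnn, hKm⟩, hK0, hKs⟩ := hK
  obtain ⟨⟨hHnn, hHm⟩, hH0, hHs⟩ := hH
  have hPF2K : PF2 K := ⟨hKnn, hKm⟩
  have hPF2H : PF2 H := ⟨hHnn, hHm⟩
  have hmidK := SPF2aux_mid K hKm
  obtain ⟨M, hM0, hM⟩ := SPF2aux_bounded K hKc hK0 hKnn hmidK hKi
  -- integrability of the shifted products
  have hints : ∀ a b : ℝ, Integrable (fun u => K (a - u) * H (u - b)) := by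
    intro a b
    apply Integrable.mono' ((hHi.comp_sub_right b).const_mul M)
    · exact ((hKc.comp (continuous_const.sub continuous_id)).mul
        (hHc.comp (continuous_id.sub continuous_const))).aestronglyMeasurable
    · refine Eventually.of_forall fun u => ?_
      have h1 : 0 ≤ K (a - u) * H (u - b) := mul_nonneg (hKnn _) (hHnn _)
      rw [Real.norm_eq_abs, abs_of_nonneg h1]
      exact mul_le_mul_of_nonneg_right (hM _) (hHnn _)
  -- the shift identity
  have hG : ∀ x y : ℝ, (∫ u, K (x - y - u) * H u) = ∫ u, K (x - u) * H (u - y) := by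
    intro x y
    have := integral_sub_right_eq_self (μ := volume) (fun u => K (x - y - u) * H u) y
    simp only [sub_sub_sub_cancel_right] at this
    exact this.symm
  refine ⟨⟨?_, ?_⟩, ?_, ?_⟩
  · intro x
    exact integral_nonneg fun y => mul_nonneg (hKnn _) (hHnn _)
  · intro x₁ x₂ y₁ y₂ hx hy
    simp only
    rw [hG x₁ y₁, hG x₂ y₂, hG x₁ y₂, hG x₂ y₁]
    have hkey := SPF2aux_key_eq K H hints x₁ x₂ y₁ y₂
    have hnnF : (0:ℝ) ≤ ∫ z : ℝ × ℝ, (K (x₁ - z.1) * K (x₂ - z.2) - K (x₁ - z.2) * K (x₂ - z.1))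
        * (H (z.1 - y₁) * H (z.2 - y₂) - H (z.1 - y₂) * H (z.2 - y₁)) :=
      integral_nonneg (μ := volume) (fun z => SPF2aux_key_nn K H hPF2K hPF2H hx hy z)
    linarith
  · simp only
    have hi0 : Integrable (fun y => K (0 - y) * H y) := by
      have := hints 0 0
      simpa using this
    have hc0 : Continuous (fun y => K (0 - y) * H y) :=
      (hKc.comp (continuous_const.sub continuous_id)).mul hHc
    have hpos : (0:ℝ) < K (0 - 0) * H 0 := by
      rw [sub_zero]; exact mul_pos hK0 hH0
    exact SPF2aux_pos _ hc0 hi0 (fun y => mul_nonneg (hKnn _) (hHnn _)) 0 hpos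
  · intro x₁ x₂ hx
    simp only
    have e1 : (∫ u, K (0 - u) * H u) = ∫ u, K (x₁ - u) * H (u - x₁) := by
      have := hG x₁ x₁
      rwa [sub_self] at this
    have e2 : (∫ u, K (0 - u) * H u) = ∫ u, K (x₂ - u) * H (u - x₂) := by
      have := hG x₂ x₂
      rwa [sub_self] at this
    rw [hG x₁ x₂, hG x₂ x₁]
    nth_rewrite 1 [e1]
    nth_rewrite 1 [e2]
    have hkey := SPF2aux_key_eq K H hints x₁ x₂ x₁ x₂
    have hnnF := SPF2aux_key_nn K H hPF2K hPF2H hx hx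
    have hiF := SPF2aux_key_int K H hints x₁ x₂ x₁ x₂
    have hcF : Continuous (fun z : ℝ × ℝ =>
        (K (x₁ - z.1) * K (x₂ - z.2) - K (x₁ - z.2) * K (x₂ - z.1))
          * (H (z.1 - x₁) * H (z.2 - x₂) - H (z.1 - x₂) * H (z.2 - x₁))) := by
      fun_prop
    have hFpt : (0:ℝ) < (K (x₁ - x₁) * K (x₂ - x₂) - K (x₁ - x₂) * K (x₂ - x₁))
          * (H (x₁ - x₁) * H (x₂ - x₂) - H (x₁ - x₂) * H (x₂ - x₁)) := by
      simp only [sub_self]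
      exact mul_pos (hKs x₁ x₂ hx) (hHs x₁ x₂ hx)
    have hposF := SPF2aux_pos _ hcF hiF (fun z => hnnF z) (x₁, x₂) hFpt
    linarith
end
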